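/- The variety V has uncountably many term clones: the collection of subsets T ⊆ F such that T contains every generator xᵢ and T is closed under substitution (for every endomorphism φ : F → F with φ(a * b) = φ(a) * φ(b), φ(0) = 0, φ(p) = p, and φ(xᵢ) ∈ T for all i, one has φ(t) ∈ T for all t ∈ T) has cardinality at least 2^ℵ₀; in particular it is uncountable. -/

import Mathlib

/-- Letters: `none` is the distinguished letter `p`, `some i` is the generator letter `xᵢ`. -/
abbrev Letter := Option ℕ

/-- The carrier of the free algebra: `0`, the letters, and the words
(pairs of a letter and a finite nonempty set of letters). -/
inductive F : Type
  | zero : F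
  | letter : Letter → F
  | word : Letter → {Y : Finset Letter // Y.Nonempty} → F

namespace F

/-- The binary operation `*` on `F`. -/
def mul : F → F → F
  | zero, _ => zero
  | _, zero => zero
  | _, word _ _ => zero
  | letter x, letter y => word x ⟨{y}, Finset.singleton_nonempty y⟩
  | word x Y, letter y =>
      if y ∈ Y.1 then zero
      else word x ⟨insert y Y.1, Finset.insert_nonempty y Y.1⟩

/-- The distinguished letter `p` as an element of `F`. -/
def p : F := letter none

/-- The generator letter `xᵢ` as an element of `F`. -/
def x (i : ℕ) : F := letter (some i)

end F

/-- A term clone of `V`, viewed as a subset of the free algebra `F`: it contains all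
generators `xᵢ` and is closed under substitution (i.e., under every endomorphism of
`F` mapping all generators into it). -/
def IsTermClone (T : Set F) : Prop :=
  (∀ i : ℕ, F.x i ∈ T) ∧
  ∀ φ : F → F, (∀ a b : F, φ (F.mul a b) = F.mul (φ a) (φ b)) →
    φ F.zero = F.zero → φ F.p = F.p → (∀ i : ℕ, φ (F.x i) ∈ T) →
    ∀ t ∈ T, φ t ∈ T

/-!
An endomorphism fixing `p` sends a word `p y₀ ⋯ yₖ` to `p φ(y₀) ⋯ φ(yₖ)`, which is either `0` or
again a `p`-headed word with `k + 1` distinct letters after `p`. Hence for every `S ⊆ ℕ`, the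
element `0`, the letters and the words `p y₀ ⋯ yₖ` with `k ∈ S` form a term clone, and distinct
`S` give distinct clones.
-/

namespace F

theorem zero_mul (a : F) : mul zero a = zero := by
  cases a <;> rfl

theorem letter_mul_eq_zero_or (x : Letter) (b : F) :
    mul (letter x) b = zero ∨
      ∃ z, mul (letter x) b = word x ⟨{z}, Finset.singleton_nonempty z⟩ := by
  cases b with
  | letter z => exact Or.inr ⟨z, rfl⟩
  | _ => exact Or.inl rfl

theorem word_mul_eq_zero_or (x : Letter) (Z : {Y : Finset Letter // Y.Nonempty}) (b : F) :
    mul (word x Z) b = zero ∨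
      ∃ z ∉ Z.1, mul (word x Z) b = word x ⟨insert z Z.1, Finset.insert_nonempty z Z.1⟩ := by
  cases b with
  | letter z =>
    by_cases hz : z ∈ Z.1
    · exact Or.inl (if_pos hz)
    · exact Or.inr ⟨z, hz, if_neg hz⟩
  | _ => exact Or.inl rfl

theorem word_singleton (x a : Letter) :
    word x ⟨{a}, Finset.singleton_nonempty a⟩ = mul (letter x) (letter a) :=
  rfl

theorem word_cons (x a : Letter) (s : Finset Letter) (ha : a ∉ s) (hs : s.Nonempty) :
    word x ⟨s.cons a ha, Finset.cons_nonempty ha⟩ = mul (word x ⟨s, hs⟩) (letter a) := by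
  simp only [mul, if_neg ha, Finset.cons_eq_insert]

theorem map_pWord_eq_zero_or {φ : F → F} (hmul : ∀ a b, φ (mul a b) = mul (φ a) (φ b))
    (hp : φ p = p) (Y : {Y : Finset Letter // Y.Nonempty}) :
    φ (word none Y) = zero ∨ ∃ Z, φ (word none Y) = word none Z ∧ Z.1.card = Y.1.card := by
  obtain ⟨Y, hY⟩ := Y
  induction hY using Finset.Nonempty.cons_induction with
  | singleton a =>
    rw [word_singleton, hmul, show letter none = p from rfl, hp]
    obtain h | ⟨z, h⟩ := letter_mul_eq_zero_or none (φ (letter a))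
    · exact Or.inl h
    · exact Or.inr ⟨_, h, rfl⟩
  | cons a s ha hs ih =>
    rw [word_cons none a s ha hs, hmul]
    obtain h | ⟨Z, h, hcard⟩ := ih
    · exact Or.inl (by rw [h, zero_mul])
    rw [h]
    obtain h' | ⟨z, hz, h'⟩ := word_mul_eq_zero_or none Z (φ (letter a))
    · exact Or.inl h'
    · exact Or.inr ⟨_, h', by rw [Finset.card_insert_of_notMem hz, Finset.card_cons, hcard]⟩

def cloneOfLengths (S : Set ℕ) : Set F :=
  {t | match t with
    | zero => True
    | letter _ => True
    | word x Y => x = none ∧ Y.1.card - 1 ∈ S}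

theorem isTermClone_cloneOfLengths (S : Set ℕ) : IsTermClone (cloneOfLengths S) := by
  refine ⟨fun _ => trivial, fun φ hmul hzero hp hx t ht => ?_⟩
  match t, ht with
  | zero, _ => rw [hzero]; trivial
  | letter none, _ => rw [show letter none = p from rfl, hp]; trivial
  | letter (some i), _ => exact hx i
  | word _ Y, ⟨rfl, hY⟩ =>
    obtain h | ⟨Z, h, hcard⟩ := map_pWord_eq_zero_or hmul hp Y
    · rw [h]; trivial
    · rw [h]; exact ⟨rfl, hcard ▸ hY⟩

def pWordOfLength (k : ℕ) : F :=
  word none ⟨(Finset.range (k + 1)).map .some, by simp⟩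

theorem pWordOfLength_mem_cloneOfLengths_iff (S : Set ℕ) (k : ℕ) :
    pWordOfLength k ∈ cloneOfLengths S ↔ k ∈ S := by
  simp [pWordOfLength, cloneOfLengths]

theorem cloneOfLengths_injective : Function.Injective cloneOfLengths := fun S S' h =>
  Set.ext fun k => by
    rw [← pWordOfLength_mem_cloneOfLengths_iff, ← pWordOfLength_mem_cloneOfLengths_iff, h]

end F

/-- The variety `V` has at least continuum many term clones; in particular,
uncountably many. -/
theorem stmt_10 :
    Cardinal.continuum ≤ Cardinal.mk {T : Set F // IsTermClone T} ∧
    ¬ {T : Set F | IsTermClone T}.Countable := by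
  have hcontinuum : Cardinal.continuum ≤ Cardinal.mk {T : Set F // IsTermClone T} := by
    rw [← Cardinal.mk_set_nat]
    exact Cardinal.mk_le_of_injective
      (f := fun S => ⟨F.cloneOfLengths S, F.isTermClone_cloneOfLengths S⟩)
      fun S S' h => F.cloneOfLengths_injective (congrArg Subtype.val h)
  refine ⟨hcontinuum, fun hcountable => ?_⟩
  exact (Cardinal.aleph0_lt_continuum.trans_le hcontinuum).not_ge
    (Cardinal.le_aleph0_iff_set_countable.mpr hcountable)
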